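/- Let γ₁₂, γ₂₁ be class-K functions with γ₁₂∘γ₂₁(s) < s for all s>0, and let b₁, b₂ ∈ ℝ≥0 satisfy b₁ ≤ max{γ₁₂(b₂), u₁} and b₂ ≤ max{γ₂₁(b₁), u₂}. If u₁ = u₂ = 0, then b₁ = b₂ = 0. -/

import Mathlib

open NNReal

def ClassK (γ : ℝ≥0 → ℝ≥0) : Prop := Continuous γ ∧ StrictMono γ ∧ γ 0 = 0

theorem ClassK.monotone {γ : ℝ≥0 → ℝ≥0} (hγ : ClassK γ) : Monotone γ :=
  hγ.2.1.monotone

theorem ClassK.map_zero {γ : ℝ≥0 → ℝ≥0} (hγ : ClassK γ) : γ 0 = 0 :=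
  hγ.2.2

theorem NNReal.eq_zero_of_le_apply_self {f : ℝ≥0 → ℝ≥0} (hf : ∀ s : ℝ≥0, 0 < s → f s < s)
    {b : ℝ≥0} (hb : b ≤ f b) : b = 0 := by
  by_contra hne
  exact (hf b (pos_iff_ne_zero.mpr hne)).not_ge hb

theorem smallgain_zero_input_two (γ₁₂ γ₂₁ : ℝ≥0 → ℝ≥0)
    (h₁₂ : ClassK γ₁₂) (h₂₁ : ClassK γ₂₁)
    (hsg : ∀ s : ℝ≥0, 0 < s → γ₁₂ (γ₂₁ s) < s)
    (b₁ b₂ u₁ u₂ : ℝ≥0)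
    (hb₁ : b₁ ≤ max (γ₁₂ b₂) u₁) (hb₂ : b₂ ≤ max (γ₂₁ b₁) u₂)
    (hu₁ : u₁ = 0) (hu₂ : u₂ = 0) :
    b₁ = 0 ∧ b₂ = 0 := by
  subst hu₁ hu₂
  rw [max_eq_left zero_le] at hb₁ hb₂
  have hb₁_zero : b₁ = 0 :=
    eq_zero_of_le_apply_self hsg (hb₁.trans (h₁₂.monotone hb₂))
  refine ⟨hb₁_zero, le_antisymm ?_ zero_le⟩
  calc b₂ ≤ γ₂₁ b₁ := hb₂
    _ = 0 := by rw [hb₁_zero, h₂₁.map_zero]
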